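/- Let H be a finite cyclic group and let x, y ∈ H. Then the multiset {x, y} is Nielsen equivalent (within H) to a multiset of the form {z, e}, where e is the identity element of H. -/

import Mathlib

open scoped Classical

section Defs

variable {G : Type*} [Group G]

/-- A single Nielsen move on a finite multiset of group elements: replace one
occurrence of `g` by `g⁻¹`, or by `h * g` or `g * h` where `h` is another
occurrence in the multiset. -/
def NielsenMove (S T : Multiset G) : Prop :=
  (∃ g ∈ S, T = g⁻¹ ::ₘ S.erase g) ∨
    (∃ g ∈ S, ∃ h ∈ S.erase g, T = h * g ::ₘ S.erase g ∨ T = g * h ::ₘ S.erase g)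

/-- Nielsen equivalence: one multiset is obtained from the other by a finite
sequence of Nielsen moves. -/
def NielsenEquiv (S T : Multiset G) : Prop :=
  Relation.ReflTransGen NielsenMove S T

/-- The elements of the multiset `S` lie in pairwise distinct left cosets of `H`. -/
def LeftDistinct (H : Subgroup G) (S : Multiset G) : Prop :=
  (S.map fun x => ((x : G) : G ⧸ H)).Nodup

/-- The elements of the multiset `S` lie in pairwise distinct right cosets of `H`
(using that `Hx = Hy ↔ x⁻¹H = y⁻¹H`). -/
def RightDistinct (H : Subgroup G) (S : Multiset G) : Prop :=
  (S.map fun x => ((x⁻¹ : G) : G ⧸ H)).Nodup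

/-- `T` is a left transversal of `H`: it contains exactly one element of each
left coset of `H`. -/
def IsLeftTransversal (H : Subgroup G) (T : Set G) : Prop :=
  ∀ g : G, ∃! t, t ∈ T ∧ ((t : G) : G ⧸ H) = ((g : G) : G ⧸ H)

/-- `T` is a right transversal of `H`: it contains exactly one element of each
right coset of `H` (using that `Hx = Hy ↔ x⁻¹H = y⁻¹H`). -/
def IsRightTransversal (H : Subgroup G) (T : Set G) : Prop :=
  ∀ g : G, ∃! t, t ∈ T ∧ ((t⁻¹ : G) : G ⧸ H) = ((g⁻¹ : G) : G ⧸ H)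

/-- The left coset `aH` as a set. -/
def lcoset (a : G) (H : Subgroup G) : Set G := {x | a⁻¹ * x ∈ H}

/-- The right coset `Ha` as a set. -/
def rcoset (H : Subgroup G) (a : G) : Set G := {x | x * a⁻¹ ∈ H}

/-- The double coset `HgH` as a set. -/
def dcoset (H : Subgroup G) (g : G) : Set G := {x | ∃ h₁ ∈ H, ∃ h₂ ∈ H, x = h₁ * g * h₂}

/-- `S` is left-right clean relative to `H`: `S ∖ H` is nonempty and its elements
lie in pairwise distinct left cosets and pairwise distinct right cosets of `H`. -/
def LeftRightClean (H : Subgroup G) (S : Multiset G) : Prop :=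
  (∃ x ∈ S, x ∉ H) ∧
    LeftDistinct H (S.filter fun x => x ∉ H) ∧
    RightDistinct H (S.filter fun x => x ∉ H)

end Defs

/-! Nielsen moves on a pair `{x, y}` realise `x ↦ x * y⁻ᵏ`, so on a pair of powers `{gᵃ, gᵇ}`
they run Euclid's algorithm on the exponents and end at `{g ^ gcd a b, 1}`. In a cyclic group
every pair is of this form. -/

section NielsenPair

variable {G : Type*} [Group G]

theorem nielsenMove_pair_inv (x y : G) : NielsenMove ({x, y} : Multiset G) {x⁻¹, y} :=
  Or.inl ⟨x, by simp, by simp⟩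

theorem nielsenMove_pair_mul_left (x y : G) : NielsenMove ({x, y} : Multiset G) {y * x, y} :=
  Or.inr ⟨x, by simp, y, by simp, Or.inl (by simp)⟩

theorem nielsenEquiv_pair_mul_inv (x y : G) : NielsenEquiv ({x, y} : Multiset G) {x * y⁻¹, y} := by
  have h := nielsenMove_pair_inv (y * x⁻¹) y
  rw [mul_inv_rev, inv_inv] at h
  exact .head (nielsenMove_pair_inv x y) (.head (nielsenMove_pair_mul_left x⁻¹ y) (.single h))

theorem nielsenEquiv_pair_mul_inv_pow (x y : G) (k : ℕ) :
    NielsenEquiv ({x, y} : Multiset G) {x * y⁻¹ ^ k, y} := by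
  induction k with
  | zero => rw [pow_zero, mul_one]; exact .refl
  | succ k ih =>
    have h := ih.trans (nielsenEquiv_pair_mul_inv (x * y⁻¹ ^ k) y)
    rwa [mul_assoc, ← pow_succ] at h

theorem nielsenEquiv_pair_zpow_natAbs (g y : G) (a : ℤ) :
    NielsenEquiv ({g ^ a, y} : Multiset G) {g ^ a.natAbs, y} := by
  rcases Int.natAbs_eq a with ha | ha
  · rw [ha, zpow_natCast, Int.natAbs_natCast]
    exact .refl
  · have h := nielsenMove_pair_inv (g ^ a) y
    rw [← zpow_neg, ha, neg_neg, zpow_natCast] at h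
    rw [ha, Int.natAbs_neg, Int.natAbs_natCast]
    exact .single h

theorem pow_mul_inv_pow_div_eq_pow_mod (g : G) (m n : ℕ) :
    g ^ n * (g ^ m)⁻¹ ^ (n / m) = g ^ (n % m) :=
  calc g ^ n * (g ^ m)⁻¹ ^ (n / m)
        = g ^ (n % m) * g ^ (m * (n / m)) * (g ^ (m * (n / m)))⁻¹ := by
          rw [inv_pow, ← pow_mul, ← pow_add, Nat.mod_add_div]
    _ = g ^ (n % m) := mul_inv_cancel_right _ _

theorem nielsenEquiv_pow_pow_gcd (g : G) (a b : ℕ) :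
    NielsenEquiv ({g ^ a, g ^ b} : Multiset G) {g ^ a.gcd b, 1} := by
  induction a, b using Nat.gcd.induction with
  | H0 n => rw [Nat.gcd_zero_left, pow_zero, Multiset.pair_comm]; exact .refl
  | H1 m n _ ih =>
    have h := nielsenEquiv_pair_mul_inv_pow (g ^ n) (g ^ m) (n / m)
    rw [pow_mul_inv_pow_div_eq_pow_mod] at h
    rw [Nat.gcd_rec, Multiset.pair_comm]
    exact h.trans ih

theorem nielsenEquiv_zpow_zpow_gcd (g : G) (a b : ℤ) :
    NielsenEquiv ({g ^ a, g ^ b} : Multiset G) {g ^ a.gcd b, 1} := by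
  have ha := nielsenEquiv_pair_zpow_natAbs g (g ^ b) a
  have hb := nielsenEquiv_pair_zpow_natAbs g (g ^ a.natAbs) b
  rw [Multiset.pair_comm (g ^ b), Multiset.pair_comm (g ^ b.natAbs)] at hb
  exact ha.trans (hb.trans (nielsenEquiv_pow_pow_gcd g _ _))

end NielsenPair

theorem stmt9_general {H : Type*} [Group H] [IsCyclic H] (x y : H) :
    ∃ z : H, NielsenEquiv ({x, y} : Multiset H) ({z, 1} : Multiset H) := by
  obtain ⟨g, hg⟩ := IsCyclic.exists_generator (α := H)
  obtain ⟨a, rfl⟩ := Subgroup.mem_zpowers_iff.mp (hg x)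
  obtain ⟨b, rfl⟩ := Subgroup.mem_zpowers_iff.mp (hg y)
  exact ⟨_, nielsenEquiv_zpow_zpow_gcd g a b⟩

/-- in a finite cyclic group `H`, any pair `{x, y}` is Nielsen
equivalent to a pair `{z, 1}` containing the identity. -/
theorem stmt9 {H : Type*} [Group H] [Finite H] [IsCyclic H] (x y : H) :
    ∃ z : H, NielsenEquiv ({x, y} : Multiset H) ({z, 1} : Multiset H) :=
  stmt9_general x y
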